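/- Let 𝔤 be a finite-dimensional real Lie algebra, η : 𝔤 \ {0} → 𝔤 smooth, N(y,w) = (1/2)Dη(y)(w) - (1/2)[y,w]. Suppose y : I → 𝔤 \ {0} solves y' = -η∘y and w : I → 𝔤 solves w' + N(y,w) + [y,w] = 0. Set n(t) = N(y(t), w(t)). Then n'(t) + Dη(y(t))(n(t)) = -R(t), where R(t) := DN(η(y(t)); y(t), w(t)) - N(y(t), N(y(t), w(t))) + N(y(t), [y(t), w(t)]) - [y(t), N(y(t), w(t))], and DN(v; y, w) denotes the derivative of the map y ↦ N(y,w) at y in direction v. -/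

import Mathlib

/-- The connection operator of a left invariant spray, on the Lie algebra:
`N(y,w) = (1/2)Dη(y)(w) - (1/2)[y,w]`. -/
noncomputable def Nconn {g : Type*} [NormedAddCommGroup g] [NormedSpace ℝ g]
    (B : g →ₗ[ℝ] g →ₗ[ℝ] g) (η : g → g) (y w : g) : g :=
  (2⁻¹ : ℝ) • fderiv ℝ η y w - (2⁻¹ : ℝ) • B y w

/-- with `y` an integral curve of `-η` and `w` linearly parallel,
`n(t) = N(y(t),w(t))` satisfies `n' + Dη(y)(n) = -R`, where
`R = DN(η(y); y, w) - N(y, N(y,w)) + N(y, [y,w]) - [y, N(y,w)]`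
is the Riemann curvature operator. -/
theorem stmt4 {g : Type*} [NormedAddCommGroup g] [NormedSpace ℝ g] [FiniteDimensional ℝ g]
    (B : g →ₗ[ℝ] g →ₗ[ℝ] g)
    (hBalt : ∀ x : g, B x x = 0)
    (hBjac : ∀ x y z : g, B x (B y z) + B y (B z x) + B z (B x y) = 0)
    (η : g → g) (hη : ContDiffOn ℝ (⊤ : ℕ∞) η {(0 : g)}ᶜ)
    (I : Set ℝ) (y w : ℝ → g)
    (hy : ∀ t ∈ I, HasDerivAt y (-(η (y t))) t ∧ y t ≠ 0)
    (hw : ∀ t ∈ I, HasDerivAt w (-(Nconn B η (y t) (w t)) - B (y t) (w t)) t) :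
    ∀ t ∈ I,
      HasDerivAt (fun s => Nconn B η (y s) (w s))
        (-(fderiv ℝ (fun z => Nconn B η z (w t)) (y t) (η (y t))
            - Nconn B η (y t) (Nconn B η (y t) (w t))
            + Nconn B η (y t) (B (y t) (w t))
            - B (y t) (Nconn B η (y t) (w t)))
          - fderiv ℝ η (y t) (Nconn B η (y t) (w t))) t := by
  intro t ht
  obtain ⟨hy', hy0⟩ := hy t ht
  have hw' := hw t ht
  have hηat : ContDiffAt ℝ (⊤ : ℕ∞) η (y t) :=
    hη.contDiffAt (isOpen_compl_singleton.mem_nhds hy0)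
  have hφ : ContDiffAt ℝ (⊤ : ℕ∞) (fderiv ℝ η) (y t) := hηat.fderiv_right (by simp)
  have hφd : DifferentiableAt ℝ (fderiv ℝ η) (y t) := hφ.differentiableAt (by simp)
  set φ' := fderiv ℝ (fderiv ℝ η) (y t) with hφ'def
  set Bc : g →L[ℝ] g →L[ℝ] g :=
    LinearMap.toContinuousLinearMap ((LinearMap.toContinuousLinearMap).toLinearMap ∘ₗ B)
    with hBcdef
  have hBc : ∀ x u : g, Bc x u = B x u := fun x u => rfl
  set w't := -(Nconn B η (y t) (w t)) - B (y t) (w t) with hw'tdef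
  -- derivative of s ↦ fderiv η (y s)
  have hc : HasDerivAt (fun s => fderiv ℝ η (y s)) (φ' (-(η (y t)))) t :=
    hφd.hasFDerivAt.comp_hasDerivAt t hy'
  have h1 : HasDerivAt (fun s => fderiv ℝ η (y s) (w s))
      (φ' (-(η (y t))) (w t) + fderiv ℝ η (y t) w't) t := hc.clm_apply hw'
  have hBy : HasDerivAt (fun s => Bc (y s)) (Bc (-(η (y t)))) t :=
    Bc.hasFDerivAt.comp_hasDerivAt t hy'
  have h2 : HasDerivAt (fun s => Bc (y s) (w s))
      (Bc (-(η (y t))) (w t) + Bc (y t) w't) t := hBy.clm_apply hw'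
  have hD : HasDerivAt (fun s => Nconn B η (y s) (w s))
      ((2⁻¹ : ℝ) • (φ' (-(η (y t))) (w t) + fderiv ℝ η (y t) w't)
        - (2⁻¹ : ℝ) • (Bc (-(η (y t))) (w t) + Bc (y t) w't)) t := by
    have := (h1.const_smul (2⁻¹ : ℝ)).sub (h2.const_smul (2⁻¹ : ℝ))
    simpa only [Nconn, hBc, Pi.sub_def, Pi.smul_def] using this
  -- fderiv of z ↦ Nconn B η z (w t)
  have hF1 : HasFDerivAt (fun z => fderiv ℝ η z (w t))
      ((fderiv ℝ η (y t)).comp (0 : g →L[ℝ] g) + φ'.flip (w t)) (y t) :=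
    hφd.hasFDerivAt.clm_apply (hasFDerivAt_const (w t) (y t))
  have hF2 : HasFDerivAt (fun z => Bc z (w t))
      ((Bc (y t)).comp (0 : g →L[ℝ] g) + Bc.flip (w t)) (y t) :=
    Bc.hasFDerivAt.clm_apply (hasFDerivAt_const (w t) (y t))
  have hF : HasFDerivAt (fun z => Nconn B η z (w t))
      ((2⁻¹ : ℝ) • ((fderiv ℝ η (y t)).comp (0 : g →L[ℝ] g) + φ'.flip (w t))
        - (2⁻¹ : ℝ) • ((Bc (y t)).comp (0 : g →L[ℝ] g) + Bc.flip (w t))) (y t) := by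
    have := (hF1.const_smul (2⁻¹ : ℝ)).sub (hF2.const_smul (2⁻¹ : ℝ))
    simpa only [Nconn, hBc, Pi.sub_def, Pi.smul_def] using this
  have hFd : fderiv ℝ (fun z => Nconn B η z (w t)) (y t) (η (y t))
      = (2⁻¹ : ℝ) • φ' (η (y t)) (w t) - (2⁻¹ : ℝ) • B (η (y t)) (w t) := by
    rw [hF.fderiv]
    simp [hBc]
  convert hD using 1
  rw [hFd, hw'tdef]
  simp only [Nconn, hBc, map_neg, map_sub, map_smul, ContinuousLinearMap.map_neg,
    ContinuousLinearMap.map_sub, ContinuousLinearMap.map_smul,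
    ContinuousLinearMap.neg_apply, LinearMap.map_neg, LinearMap.map_sub, LinearMap.map_smul]
  module
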